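/- arXiv:2405.08956 — 4 statements merged into one kernel-verified Lean document; each statement's English description precedes it below -/
import Mathlib

section
/- The Schulze method is Condorcet-consistent: if c is a Condorcet winner of an election (C,V), then c is the unique Schulze winner. -/
/-- A vote: a strict linear order on candidates, encoded by an injective ranking
(smaller rank = more preferred). -/
structure Vote (C : Type*) where
  rk : C → ℕ
  inj : Function.Injective rk

namespace Vote

/-- `v.Prefers c d` means the voter ranks `c` strictly above `d`. -/
def Prefers {C : Type*} (v : Vote C) (c d : C) : Prop := v.rk c < v.rk d

instance {C : Type*} (v : Vote C) : DecidableRel v.Prefers :=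
  fun c d => inferInstanceAs (Decidable (v.rk c < v.rk d))

end Vote

/-- `Ncount V c d`: the number of votes in `V` ranking `c` above `d`. -/
def Ncount {C : Type*} (V : List (Vote C)) (c d : C) : ℕ :=
  V.countP (fun v => decide (v.Prefers c d))

/-- The pairwise margin `D(c,d) = N(c,d) - N(d,c)`. -/
def margin {C : Type*} (V : List (Vote C)) (c d : C) : ℤ :=
  (Ncount V c d : ℤ) - (Ncount V d c : ℤ)

/-- `l` is a directed path from `c` to `d` using only vertices in `A`
(a list of at least two vertices starting at `c` and ending at `d`). -/
def IsPathOn {C : Type*} (A : Set C) (c d : C) (l : List C) : Prop :=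
  2 ≤ l.length ∧ l.head? = some c ∧ l.getLast? = some d ∧ ∀ x ∈ l, x ∈ A

/-- The strength of a path: the minimum margin along its consecutive edges. -/
def pathStrength {C : Type*} (D : C → C → ℤ) (l : List C) : ℤ :=
  (((l.zip l.tail).map fun p => D p.1 p.2).min?).getD 0

/-- The set of strengths of paths from `c` to `d` within `A`. -/
def strengths {C : Type*} (A : Set C) (D : C → C → ℤ) (c d : C) : Set ℤ :=
  {s | ∃ l : List C, IsPathOn A c d l ∧ pathStrength D l = s}

/-- `P(c,d)`: the strength of a strongest path from `c` to `d` within `A`. -/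
noncomputable def strongestPath {C : Type*} (A : Set C) (D : C → C → ℤ) (c d : C) : ℤ :=
  sSup (strengths A D c d)

/-- `c` is a Schulze winner among candidates `A` w.r.t. margins `D`. -/
def SchulzeWinnerOn {C : Type*} (A : Set C) (D : C → C → ℤ) (c : C) : Prop :=
  c ∈ A ∧ ∀ d ∈ A, d ≠ c → strongestPath A D d c ≤ strongestPath A D c d

/-- `c` is a Condorcet winner among candidates `A` for the votes `V`. -/
def CondorcetWinnerOn {C : Type*} (A : Set C) (V : List (Vote C)) (c : C) : Prop :=
  c ∈ A ∧ ∀ d ∈ A, d ≠ c → 0 < margin V c d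

/-!
Every path into a Condorcet winner `c` ends with an edge `x → c` of non-positive margin, so
`P(d,c) ≤ 0`, while the one-edge path `c → d` gives `P(c,d) ≥ D(c,d) > 0`.
-/

section StrongestPath

variable {C : Type*}

theorem pathStrength_le_of_mem_zip_tail {D : C → C → ℤ} {l : List C} {x y : C}
    (h : (x, y) ∈ l.zip l.tail) : pathStrength D l ≤ D x y := by
  have hmem : D x y ∈ (l.zip l.tail).map fun p => D p.1 p.2 := List.mem_map_of_mem h
  rw [pathStrength, List.min?_eq_some_min (List.ne_nil_of_mem hmem)]
  exact List.min_le_of_mem hmem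

theorem exists_mem_zip_tail_of_two_le_length {l : List C} (hl : 2 ≤ l.length) :
    ∃ x y, (x, y) ∈ l.zip l.tail := by
  match l, hl with
  | a :: b :: _, _ => exact ⟨a, b, by simp⟩

theorem exists_mem_zip_tail_of_getLast?_eq_some {c : C} :
    ∀ {l : List C}, 2 ≤ l.length → l.getLast? = some c → ∃ x, (x, c) ∈ l.zip l.tail
  | [a, _], _, h => ⟨a, by simp_all⟩
  | _ :: b :: y :: t, _, h => by
    obtain ⟨x, hx⟩ := exists_mem_zip_tail_of_getLast?_eq_some (l := b :: y :: t) (by simp)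
      (by rwa [List.getLast?_cons_cons] at h)
    exact ⟨x, List.mem_cons_of_mem _ hx⟩

theorem isPathOn_pair {A : Set C} {c d : C} (hc : c ∈ A) (hd : d ∈ A) :
    IsPathOn A c d [c, d] :=
  ⟨le_rfl, rfl, rfl, by simp [hc, hd]⟩

theorem bddAbove_strengths [Finite C] (A : Set C) (D : C → C → ℤ) (c d : C) :
    BddAbove (strengths A D c d) := by
  obtain ⟨M, hM⟩ := (Set.finite_range fun p : C × C => D p.1 p.2).bddAbove
  refine ⟨M, ?_⟩
  rintro s ⟨l, ⟨hlen, -, -, -⟩, rfl⟩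
  obtain ⟨x, y, hxy⟩ := exists_mem_zip_tail_of_two_le_length hlen
  exact (pathStrength_le_of_mem_zip_tail hxy).trans (hM ⟨(x, y), rfl⟩)

theorem le_strongestPath [Finite C] {A : Set C} (D : C → C → ℤ) {c d : C} (hc : c ∈ A)
    (hd : d ∈ A) : D c d ≤ strongestPath A D c d :=
  le_csSup (bddAbove_strengths A D c d) ⟨[c, d], isPathOn_pair hc hd, rfl⟩

theorem strongestPath_nonpos_of_forall_nonpos {A : Set C} {D : C → C → ℤ} {c : C}
    (h : ∀ x, D x c ≤ 0) (d : C) : strongestPath A D d c ≤ 0 := by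
  rcases (strengths A D d c).eq_empty_or_nonempty with hempty | hne
  · simp [strongestPath, hempty] -- `sSup ∅ = 0` in `ℤ`
  · refine csSup_le hne ?_
    rintro s ⟨l, ⟨hlen, -, hlast, -⟩, rfl⟩
    obtain ⟨x, hx⟩ := exists_mem_zip_tail_of_getLast?_eq_some hlen hlast
    exact (pathStrength_le_of_mem_zip_tail hx).trans (h x)

end StrongestPath

section Margin

variable {C : Type*}

theorem margin_swap (V : List (Vote C)) (c d : C) : margin V d c = -margin V c d :=
  (neg_sub _ _).symm

theorem margin_self (V : List (Vote C)) (c : C) : margin V c c = 0 :=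
  sub_self _

theorem margin_nonpos_of_forall_margin_pos {V : List (Vote C)} {c : C}
    (hc : ∀ d, d ≠ c → 0 < margin V c d) (x : C) : margin V x c ≤ 0 := by
  rcases eq_or_ne x c with rfl | hx
  · exact (margin_self V x).le
  · rw [margin_swap]
    exact neg_nonpos.mpr (hc x hx).le

end Margin

/-- Schulze is Condorcet-consistent: a Condorcet winner is the unique Schulze winner. -/
theorem schulze_condorcet_consistent {C : Type*} [Fintype C]
    (V : List (Vote C)) (c : C)
    (hc : ∀ d : C, d ≠ c → 0 < margin V c d) :
    SchulzeWinnerOn Set.univ (margin V) c ∧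
      ∀ d : C, SchulzeWinnerOn Set.univ (margin V) d → d = c := by
  have hin : ∀ d, strongestPath Set.univ (margin V) d c ≤ 0 :=
    strongestPath_nonpos_of_forall_nonpos (margin_nonpos_of_forall_margin_pos hc)
  have hout : ∀ d, d ≠ c → 0 < strongestPath Set.univ (margin V) c d := fun d hd =>
    (hc d hd).trans_le (le_strongestPath _ trivial trivial)
  refine ⟨⟨trivial, fun d _ hd => (hin d).trans (hout d hd).le⟩, fun d hd => ?_⟩
  by_contra hdc
  exact (hd.2 c trivial (Ne.symm hdc)).not_gt ((hin d).trans_lt (hout d hdc))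
end

section
/- For any voting rule E satisfying insensitivity to bottom-ranked candidates, constructive control by deleting candidates reduces to exact constructive control by replacing candidates: given an instance ((C,V),p,k) of CCDC, the instance obtained by adding k fresh candidates X = {x_1,…,x_k} and k fresh candidates D at the bottom of every vote (X above D) is a yes-instance of exact constructive control by replacing exactly k candidates if and only if ((C,V),p,k) is a yes-instance of CCDC. -/
/-!
Under IBC, a set of candidates that every voter ranks at the bottom, in one and the same order,
can be added to an election without changing its winners: peel the candidates off one by one,
always the common last one. After padding with `X` and `Ds`, every replacement instance
therefore has the winners of an election on `Cs` minus at most `k` candidates, and conversely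
a deletion of `S ⊆ Cs` is realised by also deleting `k - |S|` candidates of `X` and adding all
of `Ds`.
-/

open Finset

theorem Finset.union_sdiff_union_of_disjoint {α : Type*} [DecidableEq α] {s t u w : Finset α}
    (hst : Disjoint s t) (hu : u ⊆ s) (hw : w ⊆ t) : (s ∪ t) \ (u ∪ w) = s \ u ∪ t \ w := by
  rw [union_sdiff_distrib, sdiff_union_distrib, sdiff_union_distrib,
    (sdiff_eq_self_of_disjoint (hst.mono_right hw) : s \ w = s),
    (sdiff_eq_self_of_disjoint (hst.symm.mono_right hu) : t \ u = t),
    inter_eq_left.mpr sdiff_subset, inter_eq_right.mpr sdiff_subset]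

section

variable {C : Type*} [DecidableEq C]

def InsensitiveToBottom (E : Finset C → List (Vote C) → Set C) : Prop :=
  ∀ (A : Finset C) (x : C) (V : List (Vote C)), x ∉ A →
    (∀ v ∈ V, ∀ a ∈ A, v.Prefers a x) → E (insert x A) V = E A V

theorem exists_common_last_of_agree {V : List (Vote C)} {B : Finset C} (hB : B.Nonempty)
    (hagree : ∀ v ∈ V, ∀ v' ∈ V, ∀ a ∈ B, ∀ b ∈ B, v.Prefers a b ↔ v'.Prefers a b) :
    ∃ x ∈ B, ∀ v ∈ V, ∀ b ∈ B.erase x, v.Prefers b x := by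
  rcases V with _ | ⟨v₀, V⟩
  · obtain ⟨x, hx⟩ := hB
    exact ⟨x, hx, by simp⟩
  · obtain ⟨x, hxB, hmax⟩ := B.exists_max_image v₀.rk hB
    refine ⟨x, hxB, fun v hv b hb => ?_⟩
    have hv₀ : v₀.Prefers b x :=
      (hmax b (mem_of_mem_erase hb)).lt_of_ne fun h => ne_of_mem_erase hb (v₀.inj h)
    exact (hagree v hv v₀ (by simp) b (mem_of_mem_erase hb) x hxB).mpr hv₀

theorem InsensitiveToBottom.union_eq {E : Finset C → List (Vote C) → Set C}
    (hE : InsensitiveToBottom E) {V : List (Vote C)} {A B : Finset C} (hAB : Disjoint A B)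
    (hbelow : ∀ v ∈ V, ∀ a ∈ A, ∀ b ∈ B, v.Prefers a b)
    (hagree : ∀ v ∈ V, ∀ v' ∈ V, ∀ a ∈ B, ∀ b ∈ B, v.Prefers a b ↔ v'.Prefers a b) :
    E (A ∪ B) V = E A V := by
  induction B using strongInduction with
  | _ B ih =>
    rcases B.eq_empty_or_nonempty with rfl | hB
    · simp
    obtain ⟨x, hxB, hxlast⟩ := exists_common_last_of_agree hB hagree
    have hxA : x ∉ A ∪ B.erase x := by
      simp [disjoint_right.mp hAB hxB]
    have hinsert : insert x (A ∪ B.erase x) = A ∪ B := by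
      rw [← union_insert, insert_erase hxB]
    have hxbelow : ∀ v ∈ V, ∀ a ∈ A ∪ B.erase x, v.Prefers a x := by
      intro v hv a ha
      rcases mem_union.mp ha with ha | ha
      · exact hbelow v hv a ha x hxB
      · exact hxlast v hv a ha
    rw [← hinsert, hE _ x V hxA hxbelow]
    exact ih _ (erase_ssubset hxB) (hAB.mono_right (erase_subset x B))
      (fun v hv a ha b hb => hbelow v hv a ha b (mem_of_mem_erase hb))
      (fun v hv v' hv' a ha b hb =>
        hagree v hv v' hv' a (mem_of_mem_erase ha) b (mem_of_mem_erase hb))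

end

theorem ccdc_to_exact_ccrc_general {C : Type*} [DecidableEq C]
    (E : Finset C → List (Vote C) → Set C)
    (hIBC : ∀ (A : Finset C) (x : C) (V : List (Vote C)), x ∉ A →
      (∀ v ∈ V, ∀ a ∈ A, v.Prefers a x) → E (insert x A) V = E A V)
    (Cs X Ds : Finset C) (p : C) (k : ℕ) (V : List (Vote C))
    (hp : p ∈ Cs)
    (hCX : Disjoint Cs X) (hCD : Disjoint Cs Ds)
    (hX : X.card = k) (hD : Ds.card = k)
    (hbottom : ∀ v ∈ V,
      (∀ c ∈ Cs, ∀ x ∈ X ∪ Ds, v.Prefers c x) ∧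
      (∀ x ∈ X, ∀ d ∈ Ds, v.Prefers x d))
    (hfixed : ∀ v ∈ V, ∀ v' ∈ V, ∀ a ∈ X ∪ Ds, ∀ b ∈ X ∪ Ds,
      (v.Prefers a b ↔ v'.Prefers a b)) :
    (∃ S ⊆ Cs, p ∉ S ∧ S.card ≤ k ∧ p ∈ E (Cs \ S) V) ↔
    (∃ S ⊆ Cs ∪ X, ∃ D' ⊆ Ds, p ∉ S ∧ S.card = k ∧ D'.card = k ∧
      p ∈ E ((Cs ∪ X) \ S ∪ D') V) := by
  have hpad : ∀ A ⊆ Cs, ∀ B ⊆ X ∪ Ds, E (A ∪ B) V = E A V := fun A hA B hB =>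
    InsensitiveToBottom.union_eq hIBC ((disjoint_union_right.mpr ⟨hCX, hCD⟩).mono hA hB)
      (fun v hv a ha b hb => (hbottom v hv).1 a (hA ha) b (hB hb))
      (fun v hv v' hv' a ha b hb => hfixed v hv v' hv' a (hB ha) b (hB hb))
  constructor
  · rintro ⟨S, hS, hpS, hSk, hpE⟩
    obtain ⟨T, hT, hTcard⟩ := X.exists_subset_card_eq (n := k - S.card) (by omega)
    refine ⟨S ∪ T, union_subset_union hS hT, Ds, subset_rfl, ?_, ?_, hD, ?_⟩
    · simpa [hpS] using fun h => disjoint_left.mp hCX hp (hT h)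
    · rw [card_union_of_disjoint (hCX.mono hS hT), hTcard]
      omega
    · rwa [union_sdiff_union_of_disjoint hCX hS hT, union_assoc,
        hpad _ sdiff_subset _ (union_subset_union sdiff_subset subset_rfl)]
  · rintro ⟨S, -, D', hD', hpS, hScard, -, hpE⟩
    refine ⟨S ∩ Cs, inter_subset_right, fun h => hpS (mem_of_mem_inter_left h),
      hScard ▸ card_le_card inter_subset_left, ?_⟩
    rw [sdiff_inter_self_right]
    rwa [union_sdiff_distrib, union_assoc,
      hpad _ sdiff_subset _ (union_subset_union sdiff_subset hD')] at hpE

/-- For any IBC voting rule `E`, CCDC reduces to exact constructive control by replacing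
candidates: padding the election with `k` fresh bottom-ranked candidates `X` (above `k`
fresh bottom-ranked candidates `Ds`) yields a yes-instance of exact replacing (delete
exactly `k` from `Cs ∪ X`, add exactly `k` from `Ds`) iff the CCDC instance is a
yes-instance. -/
theorem ccdc_to_exact_ccrc {C : Type*} [Fintype C] [DecidableEq C]
    (E : Finset C → List (Vote C) → Set C)
    (hIBC : ∀ (A : Finset C) (x : C) (V : List (Vote C)), x ∉ A →
      (∀ v ∈ V, ∀ a ∈ A, v.Prefers a x) → E (insert x A) V = E A V)
    (Cs X Ds : Finset C) (p : C) (k : ℕ) (V : List (Vote C))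
    (hp : p ∈ Cs)
    (hCX : Disjoint Cs X) (hCD : Disjoint Cs Ds) (hXD : Disjoint X Ds)
    (hX : X.card = k) (hD : Ds.card = k)
    (hbottom : ∀ v ∈ V,
      (∀ c ∈ Cs, ∀ x ∈ X ∪ Ds, v.Prefers c x) ∧
      (∀ x ∈ X, ∀ d ∈ Ds, v.Prefers x d))
    (hfixed : ∀ v ∈ V, ∀ v' ∈ V, ∀ a ∈ X ∪ Ds, ∀ b ∈ X ∪ Ds,
      (v.Prefers a b ↔ v'.Prefers a b)) :
    (∃ S ⊆ Cs, p ∉ S ∧ S.card ≤ k ∧ p ∈ E (Cs \ S) V) ↔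
    (∃ S ⊆ Cs ∪ X, ∃ D' ⊆ Ds, p ∉ S ∧ S.card = k ∧ D'.card = k ∧
      p ∈ E ((Cs ∪ X) \ S ∪ D') V) :=
  ccdc_to_exact_ccrc_general E hIBC Cs X Ds p k V hp hCX hCD hX hD hbottom hfixed
end

section
/- In a weighted majority graph where the only positive margins are D(p,w) = a, D(b_j,p) = b for all j ∈ {1,…,m}, and D(w,b_j) = c for all j with c > b > a > 0, deleting no candidates gives P(w,p) = b > a = P(p,w) (via the path w → b_j → p), but each strongest path from w to p passes through some b_j; hence if X ⊆ {b_1,…,b_m} is removed with X ≠ {b_1,…,b_m}, still P(w,p) = b, and if all b_j are removed then P(w,p) = 0 < a = P(p,w). -/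
/-- Strengths of paths from `c` to `d` within `A` all of whose edges have positive margin. -/
def strengthsPos {C : Type*} (A : Set C) (D : C → C → ℤ) (c d : C) : Set ℤ :=
  {s | ∃ l : List C, IsPathOn A c d l ∧ (∀ e ∈ l.zip l.tail, 0 < D e.1 e.2) ∧
    pathStrength D l = s}

/-- Strongest positive-strength path, with the convention that the value is `0` if no
positive-strength path exists. -/
noncomputable def strongestPosPath {C : Type*} (A : Set C) (D : C → C → ℤ) (c d : C) : ℤ :=
  sSup (insert 0 (strengthsPos A D c d))

theorem List.exists_mem_zip_tail_of_getLast? {α : Type*} :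
    ∀ {l : List α} {d : α}, 2 ≤ l.length → l.getLast? = some d → ∃ x, (x, d) ∈ l.zip l.tail
  | [x, y], d, _, h => ⟨x, by simp_all⟩
  | _ :: y :: z :: t, d, _, h => by
    obtain ⟨x, hx⟩ := exists_mem_zip_tail_of_getLast? (l := y :: z :: t) (by simp)
      (by simpa using h)
    exact ⟨x, List.mem_cons_of_mem _ hx⟩

section PathStrength

variable {C : Type*} {A : Set C} {D : C → C → ℤ} {c d x : C} {s : ℤ}

theorem pathStrength_le_of_mem_zip {l : List C} {e : C × C} (he : e ∈ l.zip l.tail) :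
    pathStrength D l ≤ D e.1 e.2 := by
  have hmem : D e.1 e.2 ∈ (l.zip l.tail).map fun e => D e.1 e.2 := List.mem_map_of_mem he
  obtain ⟨m, hm⟩ := Option.ne_none_iff_exists'.1
    (List.min?_eq_none_iff.not.2 (List.ne_nil_of_mem hmem))
  rw [pathStrength, hm]
  exact (List.min?_eq_some_iff.1 hm).2 _ hmem

theorem pos_of_mem_strengthsPos (hs : s ∈ strengthsPos A D c d) : 0 < s := by
  obtain ⟨l, ⟨hlen, -⟩, hpos, rfl⟩ := hs
  have hne : (l.zip l.tail).map (fun e => D e.1 e.2) ≠ [] := by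
    obtain _ | ⟨x, _ | ⟨y, t⟩⟩ := l <;> simp_all
  obtain ⟨m, hm⟩ := Option.ne_none_iff_exists'.1 (List.min?_eq_none_iff.not.2 hne)
  obtain ⟨e, he, rfl⟩ := List.mem_map.1 (List.min?_mem hm)
  rw [pathStrength, hm]
  exact hpos e he

theorem exists_pos_edge_into_of_mem_strengthsPos (hs : s ∈ strengthsPos A D c d) :
    ∃ x ∈ A, 0 < D x d ∧ s ≤ D x d := by
  obtain ⟨l, ⟨hlen, -, hlast, hA⟩, hpos, rfl⟩ := hs
  obtain ⟨x, hx⟩ := List.exists_mem_zip_tail_of_getLast? hlen hlast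
  exact ⟨x, hA x (List.of_mem_zip hx).1, hpos _ hx, pathStrength_le_of_mem_zip hx⟩

theorem mem_strengthsPos_of_edge (hc : c ∈ A) (hd : d ∈ A) (h : 0 < D c d) :
    D c d ∈ strengthsPos A D c d := by
  refine ⟨[c, d], ⟨le_rfl, rfl, rfl, ?_⟩, ?_, ?_⟩
  · simp [hc, hd]
  · simpa using h
  · simp [pathStrength]

theorem min_mem_strengthsPos_of_edges (hc : c ∈ A) (hx : x ∈ A) (hd : d ∈ A)
    (hcx : 0 < D c x) (hxd : 0 < D x d) :
    min (D c x) (D x d) ∈ strengthsPos A D c d := by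
  refine ⟨[c, x, d], ⟨by simp, rfl, rfl, ?_⟩, ?_, ?_⟩
  · simp [hc, hx, hd]
  · simp [hcx, hxd]
  · simp [pathStrength]

theorem strongestPosPath_eq_of_mem_of_forall_edge_le {v : ℤ} (hv : v ∈ strengthsPos A D c d)
    (h : ∀ x ∈ A, 0 < D x d → D x d ≤ v) : strongestPosPath A D c d = v := by
  refine IsGreatest.csSup_eq ⟨Set.mem_insert_of_mem _ hv, ?_⟩
  rintro s (rfl | hs)
  · exact (pos_of_mem_strengthsPos hv).le
  · obtain ⟨x, hxA, hx, hsx⟩ := exists_pos_edge_into_of_mem_strengthsPos hs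
    exact hsx.trans (h x hxA hx)

theorem strongestPosPath_eq_zero_of_forall_nonpos (h : ∀ x ∈ A, D x d ≤ 0) :
    strongestPosPath A D c d = 0 := by
  have hempty : strengthsPos A D c d = ∅ := Set.eq_empty_of_forall_notMem fun s hs => by
    obtain ⟨x, hxA, hx, -⟩ := exists_pos_edge_into_of_mem_strengthsPos hs
    exact (h x hxA).not_gt hx
  simp [strongestPosPath, hempty]

end PathStrength

namespace ThreeLayers

variable {C : Type*} {D : C → C → ℤ} {p w : C} {Bs : Set C} {a b₀ c₀ : ℤ}

theorem mem_of_margin_into_p_pos (hBs : Bs = {x : C | x ≠ p ∧ x ≠ w})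
    (hskew : ∀ x y : C, D x y = - D y x) (hpwD : D p w = a) (ha : 0 < a)
    {x : C} (hx : 0 < D x p) : x ∈ Bs := by
  subst hBs
  refine ⟨fun hxp => ?_, fun hxw => ?_⟩
  · subst hxp; linarith [hskew x x]
  · subst hxw; linarith [hskew p x]

theorem eq_p_of_margin_into_w_pos (hBs : Bs = {x : C | x ≠ p ∧ x ≠ w})
    (hskew : ∀ x y : C, D x y = - D y x) (hwb : ∀ x ∈ Bs, D w x = c₀) (hc : 0 < c₀)
    {x : C} (hx : 0 < D x w) : x = p := by
  by_contra hxp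
  by_cases hxw : x = w
  · subst hxw; linarith [hskew x x]
  · linarith [hskew w x, hwb x (hBs ▸ ⟨hxp, hxw⟩)]

theorem strongestPosPath_w_p_eq (hBs : Bs = {x : C | x ≠ p ∧ x ≠ w})
    (hskew : ∀ x y : C, D x y = - D y x) (hpwD : D p w = a) (ha : 0 < a)
    (hab : a < b₀) (hbc : b₀ < c₀) (hbp : ∀ x ∈ Bs, D x p = b₀) (hwb : ∀ x ∈ Bs, D w x = c₀)
    {A : Set C} {x : C} (hx : x ∈ Bs) (hxA : x ∈ A) (hwA : w ∈ A) (hpA : p ∈ A) :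
    strongestPosPath A D w p = b₀ := by
  have hpath := min_mem_strengthsPos_of_edges hwA hxA hpA
    (by linarith [hwb x hx]) (by linarith [hbp x hx])
  rw [hwb x hx, hbp x hx, min_eq_right hbc.le] at hpath
  exact strongestPosPath_eq_of_mem_of_forall_edge_le hpath fun y _ hy =>
    (hbp y (mem_of_margin_into_p_pos hBs hskew hpwD ha hy)).le

theorem strongestPosPath_w_p_eq_zero (hBs : Bs = {x : C | x ≠ p ∧ x ≠ w})
    (hskew : ∀ x y : C, D x y = - D y x) (hpwD : D p w = a) (ha : 0 < a)
    {A : Set C} (hA : Disjoint A Bs) : strongestPosPath A D w p = 0 :=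
  strongestPosPath_eq_zero_of_forall_nonpos fun _ hxA => not_lt.1 fun hx =>
    hA.notMem_of_mem_left hxA (mem_of_margin_into_p_pos hBs hskew hpwD ha hx)

theorem strongestPosPath_p_w_eq (hBs : Bs = {x : C | x ≠ p ∧ x ≠ w})
    (hskew : ∀ x y : C, D x y = - D y x) (hpwD : D p w = a) (ha : 0 < a)
    (hwb : ∀ x ∈ Bs, D w x = c₀) (hc : 0 < c₀) {A : Set C} (hpA : p ∈ A) (hwA : w ∈ A) :
    strongestPosPath A D p w = a := by
  refine hpwD ▸ strongestPosPath_eq_of_mem_of_forall_edge_le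
    (mem_strengthsPos_of_edge hpA hwA (hpwD ▸ ha)) fun y _ hy => ?_
  rw [eq_p_of_margin_into_w_pos hBs hskew hwb hc hy]

end ThreeLayers

theorem strongest_paths_through_B_general {C : Type*}
    (p w : C)
    (Bs : Set C) (hBs : Bs = {x : C | x ≠ p ∧ x ≠ w}) (hBne : Bs.Nonempty)
    (a b₀ c₀ : ℤ) (ha : 0 < a) (hab : a < b₀) (hbc : b₀ < c₀)
    (D : C → C → ℤ)
    (hskew : ∀ x y : C, D x y = - D y x)
    (hpwD : D p w = a)
    (hbp : ∀ x ∈ Bs, D x p = b₀)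
    (hwb : ∀ x ∈ Bs, D w x = c₀) :
    strongestPosPath Set.univ D w p = b₀ ∧
    strongestPosPath Set.univ D p w = a ∧
    a < b₀ ∧
    (∀ X : Set C, X ⊆ Bs → X ≠ Bs → strongestPosPath (Set.univ \ X) D w p = b₀) ∧
    strongestPosPath (Set.univ \ Bs) D w p = 0 ∧
    strongestPosPath (Set.univ \ Bs) D p w = a := by
  have hc : 0 < c₀ := ha.trans (hab.trans hbc)
  have hpB : p ∉ Bs := by simp [hBs]
  have hwB : w ∉ Bs := by simp [hBs]
  obtain ⟨x₀, hx₀⟩ := hBne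
  open ThreeLayers in
  exact ⟨strongestPosPath_w_p_eq hBs hskew hpwD ha hab hbc hbp hwb hx₀ trivial trivial trivial,
    strongestPosPath_p_w_eq hBs hskew hpwD ha hwb hc trivial trivial, hab,
    fun X hXB hXne => by
      obtain ⟨x, hxB, hxX⟩ := Set.exists_of_ssubset (hXB.ssubset_of_ne hXne)
      exact strongestPosPath_w_p_eq hBs hskew hpwD ha hab hbc hbp hwb hxB ⟨trivial, hxX⟩
        ⟨trivial, fun h => hwB (hXB h)⟩ ⟨trivial, fun h => hpB (hXB h)⟩,
    strongestPosPath_w_p_eq_zero hBs hskew hpwD ha Set.disjoint_sdiff_left,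
    strongestPosPath_p_w_eq hBs hskew hpwD ha hwb hc ⟨trivial, hpB⟩ ⟨trivial, hwB⟩⟩

/-- In a WMG on `{p, w} ∪ B` whose only positive margins are `D(p,w) = a`, `D(b,p) = b₀`
and `D(w,b) = c₀` for all `b ∈ B`, with `c₀ > b₀ > a > 0`: without deletions
`P(w,p) = b₀ > a = P(p,w)` (via paths `w → b → p`); every strongest path from `w` to `p`
passes through `B`, so removing any proper subset `X ⊊ B` leaves `P(w,p) = b₀`, while
removing all of `B` gives `P(w,p) = 0 < a = P(p,w)`. -/
theorem strongest_paths_through_B {C : Type*} [Fintype C] [DecidableEq C]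
    (p w : C) (hpw : p ≠ w)
    (Bs : Set C) (hBs : Bs = {x : C | x ≠ p ∧ x ≠ w}) (hBne : Bs.Nonempty)
    (a b₀ c₀ : ℤ) (ha : 0 < a) (hab : a < b₀) (hbc : b₀ < c₀)
    (D : C → C → ℤ)
    (hskew : ∀ x y : C, D x y = - D y x)
    (hpwD : D p w = a)
    (hbp : ∀ x ∈ Bs, D x p = b₀)
    (hwb : ∀ x ∈ Bs, D w x = c₀)
    (hbb : ∀ x ∈ Bs, ∀ y ∈ Bs, D x y = 0) :
    strongestPosPath Set.univ D w p = b₀ ∧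
    strongestPosPath Set.univ D p w = a ∧
    a < b₀ ∧
    (∀ X : Set C, X ⊆ Bs → X ≠ Bs → strongestPosPath (Set.univ \ X) D w p = b₀) ∧
    strongestPosPath (Set.univ \ Bs) D w p = 0 ∧
    strongestPosPath (Set.univ \ Bs) D p w = a :=
  strongest_paths_through_B_general p w Bs hBs hBne a b₀ c₀ ha hab hbc D hskew hpwD hbp hwb
end

section
/- In the ranked pairs procedure with a fixed tie-breaking order, the resulting directed graph is acyclic, and (for a nonempty finite candidate set) it has at least one source; thus a ranked pairs winner always exists. -/
/-- A digraph (given as a finite edge set) has a cycle if some vertex reaches itself via a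
nonempty directed walk. -/
def HasCycle {C : Type*} (G : Finset (C × C)) : Prop :=
  ∃ a : C, Relation.TransGen (fun x y => (x, y) ∈ G) a a

open Classical in
/-- One step of the ranked pairs procedure: add the edge unless it creates a cycle. -/
noncomputable def rpStep {C : Type*} [DecidableEq C] (G : Finset (C × C)) (e : C × C) :
    Finset (C × C) :=
  if HasCycle (insert e G) then G else insert e G

/-- The final ranked pairs graph obtained by processing the list of pairs in order. -/
noncomputable def rpGraph {C : Type*} [DecidableEq C] (L : List (C × C)) : Finset (C × C) :=
  L.foldl rpStep ∅

section

variable {C : Type*}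

theorem not_hasCycle_empty : ¬ HasCycle (∅ : Finset (C × C)) := by
  rintro ⟨a, h | ⟨-, h⟩⟩ <;> simp at h

theorem not_hasCycle_rpStep [DecidableEq C] {G : Finset (C × C)} (hG : ¬ HasCycle G)
    (e : C × C) : ¬ HasCycle (rpStep G e) := by
  unfold rpStep
  split_ifs with h
  exacts [hG, h]

theorem not_hasCycle_foldl_rpStep [DecidableEq C] (L : List (C × C)) {G : Finset (C × C)}
    (hG : ¬ HasCycle G) : ¬ HasCycle (L.foldl rpStep G) := by
  induction L generalizing G with
  | nil => exact hG
  | cons e L ih => exact ih (not_hasCycle_rpStep hG e)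

theorem not_hasCycle_rpGraph [DecidableEq C] (L : List (C × C)) : ¬ HasCycle (rpGraph L) :=
  not_hasCycle_foldl_rpStep L not_hasCycle_empty

theorem wellFounded_of_not_hasCycle [Finite C] {G : Finset (C × C)} (hG : ¬ HasCycle G) :
    WellFounded (fun x y => (x, y) ∈ G) := by
  let r := Relation.TransGen (fun x y => (x, y) ∈ G)
  have : IsTrans C r := ⟨fun _ _ _ => Relation.TransGen.trans⟩
  have : Std.Irrefl r := ⟨fun a h => hG ⟨a, h⟩⟩
  exact Subrelation.wf (fun h => Relation.TransGen.single h)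
    (Finite.wellFounded_of_trans_of_irrefl r)

theorem exists_source_of_not_hasCycle [Finite C] [Nonempty C] {G : Finset (C × C)}
    (hG : ¬ HasCycle G) : ∃ c : C, ∀ d : C, (d, c) ∉ G := by
  obtain ⟨c, -, hc⟩ := (wellFounded_of_not_hasCycle hG).has_min Set.univ Set.univ_nonempty
  exact ⟨c, fun d hd => hc d trivial hd⟩

end

theorem ranked_pairs_acyclic_and_has_source_general {C : Type*} [Fintype C] [DecidableEq C]
    (L : List (C × C)) :
    ¬ HasCycle (rpGraph L) ∧
    (Nonempty C → ∃ c : C, ∀ d : C, (d, c) ∉ rpGraph L) :=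
  ⟨not_hasCycle_rpGraph L, fun _ => exists_source_of_not_hasCycle (not_hasCycle_rpGraph L)⟩

/-- For any processing order `L` listing every ordered pair of distinct candidates exactly
once, sorted by nonincreasing margin (ties broken by the fixed order in which they appear
in `L`), the ranked pairs graph is acyclic and, for a nonempty finite candidate set, has a
source; thus a ranked pairs winner always exists. -/
theorem ranked_pairs_acyclic_and_has_source {C : Type*} [Fintype C] [DecidableEq C]
    (D : C → C → ℤ) (L : List (C × C))
    (hmem : ∀ a b : C, a ≠ b → (a, b) ∈ L)
    (hnodup : L.Nodup)
    (hdistinct : ∀ e ∈ L, e.1 ≠ e.2)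
    (hsorted : L.Pairwise (fun e f => D f.1 f.2 ≤ D e.1 e.2)) :
    ¬ HasCycle (rpGraph L) ∧
    (Nonempty C → ∃ c : C, ∀ d : C, (d, c) ∉ rpGraph L) :=
  ranked_pairs_acyclic_and_has_source_general L
end
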